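/- arXiv:2410.04554 — 5 statements merged into one kernel-verified Lean document; each statement's English description precedes it below -/
import Mathlib

section
/- Let I ⊆ {1,...,n} with |I| = h be such that |r_i| ≤ |r_j| for all i ∈ I and j ∉ I. Then the vector r* defined by r*_i = r_i/(2γ+1) for i ∈ I and r*_i = r_i for i ∉ I is a minimizer of α ↦ γ·T_h(α) + (1/2)‖α − r‖₂² over R^n. -/
/-!
Write `c = 2γ + 1`. The scalar identity `c (γ a² + (a - b)²/2) - γ b² = (c a - b)² / 2` shows
that `γ a² + (a - b)²/2 ≥ (γ / c) b²`, with equality at `a = b / c`. Summing over any `Λ` with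
`|Λ| = h` bounds the objective at every `α` below by `(γ / c) ∑_{i ∈ Λ} r_i²`, which is at least
`(γ / c) ∑_{i ∈ I} r_i²` because `I` collects the `h` entries of smallest magnitude. Choosing
`Λ = I` in `T_h(r*)` shows that `r*` attains this bound.
-/

/-- Trimmed squares function. -/
noncomputable def Th (n h : ℕ) (r : Fin n → ℝ) : ℝ :=
  sInf {s : ℝ | ∃ Λ : Finset (Fin n), Λ.card = h ∧ s = ∑ i ∈ Λ, r i ^ 2}

open Finset

namespace Finset

variable {ι M : Type*} [AddCommMonoid M] [LinearOrder M] [IsOrderedAddMonoid M]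

theorem sum_le_sum_of_card_eq_of_forall_le [DecidableEq ι] {I Λ : Finset ι} {f : ι → M}
    (hcard : #I = #Λ) (hle : ∀ i ∈ I, ∀ j ∉ I, f i ≤ f j) :
    ∑ i ∈ I, f i ≤ ∑ i ∈ Λ, f i := by
  rw [← sum_inter_add_sum_sdiff I Λ, ← sum_inter_add_sum_sdiff Λ I, inter_comm]
  refine add_le_add_right ?_ _
  have hsdiff : #(I \ Λ) = #(Λ \ I) := card_sdiff_comm hcard
  rcases (Λ \ I).eq_empty_or_nonempty with hempty | ⟨j₀, hj₀⟩
  · rw [hempty, card_empty, card_eq_zero] at hsdiff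
    simp [hsdiff, hempty]
  obtain ⟨j, hj, hmin⟩ := exists_min_image (Λ \ I) f ⟨j₀, hj₀⟩
  calc ∑ i ∈ I \ Λ, f i ≤ #(I \ Λ) • f j :=
        sum_le_card_nsmul _ _ _ fun i hi => hle i (mem_sdiff.1 hi).1 j (mem_sdiff.1 hj).2
    _ = #(Λ \ I) • f j := by rw [hsdiff]
    _ ≤ ∑ i ∈ Λ \ I, f i := card_nsmul_le_sum _ _ _ hmin

end Finset

section ScalarProx

variable {γ : ℝ}

theorem div_two_mul_add_one_mul_sq_le (hγ : 0 ≤ γ) (a b : ℝ) :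
    γ / (2 * γ + 1) * b ^ 2 ≤ γ * a ^ 2 + 1 / 2 * (a - b) ^ 2 := by
  rw [div_mul_eq_mul_div, div_le_iff₀ (by positivity)]
  nlinarith [sq_nonneg ((2 * γ + 1) * a - b)]

theorem prox_at_div_two_mul_add_one (hγ : 0 ≤ γ) (b : ℝ) :
    γ * (b / (2 * γ + 1)) ^ 2 + 1 / 2 * (b / (2 * γ + 1) - b) ^ 2 =
      γ / (2 * γ + 1) * b ^ 2 := by
  have : 2 * γ + 1 ≠ 0 := by positivity
  field_simp
  ring

end ScalarProx

section TrimmedSquares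

variable {n h : ℕ}

theorem Th_le_sum_sq (r : Fin n → ℝ) {Λ : Finset (Fin n)} (hΛ : #Λ = h) :
    Th n h r ≤ ∑ i ∈ Λ, r i ^ 2 :=
  csInf_le ⟨0, by rintro s ⟨Λ, -, rfl⟩; positivity⟩ ⟨Λ, hΛ, rfl⟩

theorem le_mul_Th_add {γ a b : ℝ} (hγ : 0 < γ) (hhn : h ≤ n) (α : Fin n → ℝ)
    (H : ∀ Λ : Finset (Fin n), #Λ = h → a ≤ γ * ∑ i ∈ Λ, α i ^ 2 + b) :
    a ≤ γ * Th n h α + b := by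
  suffices (a - b) / γ ≤ Th n h α by
    rw [div_le_iff₀ hγ] at this
    linarith
  obtain ⟨Λ₀, -, hΛ₀⟩ := exists_subset_card_eq (s := (univ : Finset (Fin n))) (by simpa using hhn)
  refine le_csInf ⟨_, Λ₀, hΛ₀, rfl⟩ ?_
  rintro s ⟨Λ, hΛ, rfl⟩
  rw [div_le_iff₀ hγ]
  linarith [H Λ hΛ]

end TrimmedSquares

section Prox

variable {n h : ℕ} {γ : ℝ}

noncomputable def proxObjective (n h : ℕ) (γ : ℝ) (r α : Fin n → ℝ) : ℝ :=
  γ * Th n h α + 1 / 2 * ∑ i, (α i - r i) ^ 2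

theorem le_proxObjective (hγ : 0 < γ) (hhn : h ≤ n) {r : Fin n → ℝ} {I : Finset (Fin n)}
    (hmin : ∀ Λ : Finset (Fin n), #Λ = h → ∑ i ∈ I, r i ^ 2 ≤ ∑ i ∈ Λ, r i ^ 2)
    (α : Fin n → ℝ) :
    γ / (2 * γ + 1) * ∑ i ∈ I, r i ^ 2 ≤ proxObjective n h γ r α := by
  refine le_mul_Th_add hγ hhn α fun Λ hΛ => ?_
  calc γ / (2 * γ + 1) * ∑ i ∈ I, r i ^ 2
      ≤ γ / (2 * γ + 1) * ∑ i ∈ Λ, r i ^ 2 := by gcongr ?_ * ?_; exact hmin Λ hΛ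
    _ ≤ ∑ i ∈ Λ, (γ * α i ^ 2 + 1 / 2 * (α i - r i) ^ 2) := by
        rw [mul_sum]
        exact sum_le_sum fun i _ => div_two_mul_add_one_mul_sq_le hγ.le (α i) (r i)
    _ ≤ γ * ∑ i ∈ Λ, α i ^ 2 + 1 / 2 * ∑ i, (α i - r i) ^ 2 := by
        rw [sum_add_distrib, ← mul_sum, ← mul_sum]
        gcongr _ + _ * ?_
        exact sum_le_sum_of_subset_of_nonneg (subset_univ Λ) fun i _ _ => sq_nonneg _

theorem proxObjective_shrink_le (hγ : 0 ≤ γ) (r : Fin n → ℝ) {I : Finset (Fin n)}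
    (hI : #I = h) :
    proxObjective n h γ r (fun i => if i ∈ I then r i / (2 * γ + 1) else r i) ≤
      γ / (2 * γ + 1) * ∑ i ∈ I, r i ^ 2 := by
  set rstar : Fin n → ℝ := fun i => if i ∈ I then r i / (2 * γ + 1) else r i
  have hdist : ∑ i, (rstar i - r i) ^ 2 = ∑ i ∈ I, (rstar i - r i) ^ 2 :=
    (sum_subset (subset_univ I) fun i _ hi => by simp [rstar, hi]).symm
  calc proxObjective n h γ r rstar
      ≤ ∑ i ∈ I, (γ * rstar i ^ 2 + 1 / 2 * (rstar i - r i) ^ 2) := by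
        rw [proxObjective, hdist, sum_add_distrib, ← mul_sum, ← mul_sum]
        gcongr
        exact Th_le_sum_sq rstar hI
    _ = γ / (2 * γ + 1) * ∑ i ∈ I, r i ^ 2 := by
        rw [mul_sum]
        refine sum_congr rfl fun i hi => ?_
        simp only [rstar, if_pos hi]
        exact prox_at_div_two_mul_add_one hγ (r i)

end Prox

theorem stmt_2_general (n h : ℕ)
    (γ : ℝ) (hγ : 0 < γ) (r : Fin n → ℝ)
    (I : Finset (Fin n)) (hI : I.card = h)
    (hord : ∀ i ∈ I, ∀ j ∉ I, |r i| ≤ |r j|)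
    (rstar : Fin n → ℝ)
    (hrstar : rstar = fun i => if i ∈ I then r i / (2 * γ + 1) else r i) :
    ∀ α : Fin n → ℝ,
      γ * Th n h rstar + (1 / 2) * ∑ i, (rstar i - r i) ^ 2 ≤
        γ * Th n h α + (1 / 2) * ∑ i, (α i - r i) ^ 2 := by
  intro α
  have hhn : h ≤ n := hI ▸ (card_le_univ I).trans_eq (Fintype.card_fin n)
  have hmin : ∀ Λ : Finset (Fin n), #Λ = h → ∑ i ∈ I, r i ^ 2 ≤ ∑ i ∈ Λ, r i ^ 2 :=
    fun Λ hΛ => sum_le_sum_of_card_eq_of_forall_le (hI.trans hΛ.symm)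
      fun i hi j hj => sq_le_sq.2 (hord i hi j hj)
  subst hrstar
  exact (proxObjective_shrink_le hγ.le r hI).trans (le_proxObjective hγ hhn hmin α)

/-- shrinking the h smallest-magnitude entries gives a minimizer of the
proximal subproblem of γ·T_h. -/
theorem stmt_2 (n h : ℕ) (hh : 1 ≤ h) (hhn : h ≤ n)
    (γ : ℝ) (hγ : 0 < γ) (r : Fin n → ℝ)
    (I : Finset (Fin n)) (hI : I.card = h)
    (hord : ∀ i ∈ I, ∀ j ∉ I, |r i| ≤ |r j|)
    (rstar : Fin n → ℝ)
    (hrstar : rstar = fun i => if i ∈ I then r i / (2 * γ + 1) else r i) :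
    ∀ α : Fin n → ℝ,
      γ * Th n h rstar + (1 / 2) * ∑ i, (rstar i - r i) ^ 2 ≤
        γ * Th n h α + (1 / 2) * ∑ i, (α i - r i) ^ 2 :=
  stmt_2_general n h γ hγ r I hI hord rstar hrstar
end

section
/- If (β₀*, β*, α*) is an optimal solution of the STRLS problem min over (β₀, β, α) of (1/2)‖y − β₀·1 − Xβ − α‖₂² + (1/2)T_h(α) + λ‖β‖₁, then (β₀*, β*) is an optimal solution of the SLTS problem min over (β₀, β) of (1/4)·T_h(y − β₀·1 − Xβ) + λ‖β‖₁. -/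
open Finset

section TrimmedSquares

variable {n h : ℕ}

theorem exists_Th_eq_sum_sq (hhn : h ≤ n) (r : Fin n → ℝ) :
    ∃ Λ : Finset (Fin n), #Λ = h ∧ Th n h r = ∑ i ∈ Λ, r i ^ 2 := by
  have hset : {s : ℝ | ∃ Λ : Finset (Fin n), #Λ = h ∧ s = ∑ i ∈ Λ, r i ^ 2} =
      ↑((univ.powersetCard h).image fun Λ => ∑ i ∈ Λ, r i ^ 2) := by
    ext s
    simp [eq_comm]
  have hne : ((univ.powersetCard h).image fun Λ => ∑ i ∈ Λ, r i ^ 2).Nonempty :=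
    (powersetCard_nonempty.2 (by simpa using hhn)).image _
  obtain ⟨Λ, hΛ, hmin⟩ := mem_image.1 hne.csInf_mem
  exact ⟨Λ, by simpa using hΛ, by rw [Th, hset, hmin]⟩

theorem Th_le_two_mul_sum_sq_sub_add_two_mul_Th (hhn : h ≤ n) (r α : Fin n → ℝ) :
    Th n h r ≤ 2 * ∑ i, (r i - α i) ^ 2 + 2 * Th n h α := by
  obtain ⟨Λ, hΛ, hα⟩ := exists_Th_eq_sum_sq hhn α
  calc Th n h r ≤ ∑ i ∈ Λ, r i ^ 2 := Th_le_sum_sq r hΛ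
    _ ≤ ∑ i ∈ Λ, (2 * (r i - α i) ^ 2 + 2 * α i ^ 2) :=
      sum_le_sum fun i _ => by nlinarith [sq_nonneg (r i - 2 * α i)]
    _ = 2 * ∑ i ∈ Λ, (r i - α i) ^ 2 + 2 * Th n h α := by
      rw [sum_add_distrib, ← mul_sum, ← mul_sum, hα]
    _ ≤ 2 * ∑ i, (r i - α i) ^ 2 + 2 * Th n h α := by
      gcongr 2 * ?_ + _
      exact sum_le_sum_of_subset_of_nonneg (subset_univ Λ) fun _ _ _ => by positivity

theorem exists_sum_sq_sub_add_Th_le_half_Th (hhn : h ≤ n) (r : Fin n → ℝ) :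
    ∃ α : Fin n → ℝ, ∑ i, (r i - α i) ^ 2 + Th n h α ≤ 1 / 2 * Th n h r := by
  obtain ⟨Λ, hΛ, hr⟩ := exists_Th_eq_sum_sq hhn r
  let α : Fin n → ℝ := fun i => if i ∈ Λ then r i / 2 else r i
  have hres : ∑ i, (r i - α i) ^ 2 = ∑ i ∈ Λ, (r i / 2) ^ 2 := by
    rw [← univ_inter Λ, ← sum_ite_mem]
    exact sum_congr rfl fun i _ => by by_cases hi : i ∈ Λ <;> simp only [α, hi, if_true, if_false] <;> ring
  have hα : Th n h α ≤ ∑ i ∈ Λ, (r i / 2) ^ 2 :=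
    (Th_le_sum_sq α hΛ).trans_eq (sum_congr rfl fun i hi => by simp [α, hi])
  refine ⟨α, ?_⟩
  calc ∑ i, (r i - α i) ^ 2 + Th n h α ≤ 2 * ∑ i ∈ Λ, (r i / 2) ^ 2 := by linarith
    _ = 1 / 2 * Th n h r := by
      rw [hr, mul_sum, mul_sum]
      exact sum_congr rfl fun i _ => by ring

end TrimmedSquares

theorem stmt_5_general (n d h : ℕ) (hhn : h ≤ n)
    (y : Fin n → ℝ) (X : Matrix (Fin n) (Fin d) ℝ) (lam : ℝ)
    (F : ℝ → (Fin d → ℝ) → ℝ)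
    (hF : F = fun β₀ β =>
      (1 / 4) * Th n h (fun i => y i - β₀ - X.mulVec β i) + lam * ∑ j, |β j|)
    (L : ℝ → (Fin d → ℝ) → (Fin n → ℝ) → ℝ)
    (hL : L = fun β₀ β α =>
      (1 / 2) * ∑ i, (y i - β₀ - X.mulVec β i - α i) ^ 2 + (1 / 2) * Th n h α
        + lam * ∑ j, |β j|)
    (β₀s : ℝ) (βs : Fin d → ℝ) (αs : Fin n → ℝ)
    (hopt : ∀ (β₀ : ℝ) (β : Fin d → ℝ) (α : Fin n → ℝ), L β₀s βs αs ≤ L β₀ β α) :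
    ∀ (β₀ : ℝ) (β : Fin d → ℝ), F β₀s βs ≤ F β₀ β := by
  intro β₀ β
  subst hF hL
  have hs := Th_le_two_mul_sum_sq_sub_add_two_mul_Th hhn (fun i => y i - β₀s - X.mulVec βs i) αs
  obtain ⟨α, hα⟩ := exists_sum_sq_sub_add_Th_le_half_Th hhn (fun i => y i - β₀ - X.mulVec β i)
  have hLα := hopt β₀ β α
  dsimp only at hs hα hLα ⊢
  linarith

/-- optimality for STRLS implies optimality of (β₀*, β*) for SLTS. -/
theorem stmt_5 (n d h : ℕ) (hh : 1 ≤ h) (hhn : h ≤ n)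
    (y : Fin n → ℝ) (X : Matrix (Fin n) (Fin d) ℝ) (lam : ℝ) (hlam : 0 < lam)
    (F : ℝ → (Fin d → ℝ) → ℝ)
    (hF : F = fun β₀ β =>
      (1 / 4) * Th n h (fun i => y i - β₀ - X.mulVec β i) + lam * ∑ j, |β j|)
    (L : ℝ → (Fin d → ℝ) → (Fin n → ℝ) → ℝ)
    (hL : L = fun β₀ β α =>
      (1 / 2) * ∑ i, (y i - β₀ - X.mulVec β i - α i) ^ 2 + (1 / 2) * Th n h α
        + lam * ∑ j, |β j|)
    (β₀s : ℝ) (βs : Fin d → ℝ) (αs : Fin n → ℝ)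
    (hopt : ∀ (β₀ : ℝ) (β : Fin d → ℝ) (α : Fin n → ℝ), L β₀s βs αs ≤ L β₀ β α) :
    ∀ (β₀ : ℝ) (β : Fin d → ℝ), F β₀s βs ≤ F β₀ β :=
  stmt_5_general n d h hhn y X lam F hF L hL β₀s βs αs hopt
end

section
/- The infimum over (β₀, β) of (1/4)·T_h(y − β₀·1 − Xβ) + λ‖β‖₁ equals the infimum over (β₀, β, α) of (1/2)‖y − β₀·1 − Xβ − α‖₂² + (1/2)T_h(α) + λ‖β‖₁. -/
open Finset

/-- Unbounded infima in `ℝ` are `0`, so no boundedness hypothesis is needed. -/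
theorem Real.iInf_eq_iInf_of_forall_exists_le {ι ι' : Type*} [Nonempty ι] [Nonempty ι']
    {f : ι → ℝ} {g : ι' → ℝ} (hfg : ∀ j, ∃ i, f i ≤ g j) (hgf : ∀ i, ∃ j, g j ≤ f i) :
    ⨅ i, f i = ⨅ j, g j := by
  by_cases hf : BddBelow (Set.range f)
  · have hg : BddBelow (Set.range g) := by
      obtain ⟨m, hm⟩ := hf
      refine ⟨m, ?_⟩
      rintro _ ⟨j, rfl⟩
      obtain ⟨i, hi⟩ := hfg j
      exact (hm ⟨i, rfl⟩).trans hi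
    exact le_antisymm (ciInf_mono_of_forall_exists hf hfg) (ciInf_mono_of_forall_exists hg hgf)
  · have hg : ¬ BddBelow (Set.range g) := by
      rintro ⟨m, hm⟩
      refine hf ⟨m, ?_⟩
      rintro _ ⟨i, rfl⟩
      obtain ⟨j, hj⟩ := hgf i
      exact (hm ⟨j, rfl⟩).trans hj
    rw [Real.iInf_of_not_bddBelow hf, Real.iInf_of_not_bddBelow hg]

section TrimmedSquares

variable {n h : ℕ}

theorem Th_le_sum (r : Fin n → ℝ) {Λ : Finset (Fin n)} (hΛ : Λ.card = h) :
    Th n h r ≤ ∑ i ∈ Λ, r i ^ 2 :=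
  csInf_le ⟨0, by rintro _ ⟨Λ, -, rfl⟩; positivity⟩ ⟨Λ, hΛ, rfl⟩

theorem exists_Th_eq_sum (hhn : h ≤ n) (r : Fin n → ℝ) :
    ∃ Λ : Finset (Fin n), Λ.card = h ∧ Th n h r = ∑ i ∈ Λ, r i ^ 2 := by
  have hne : {s : ℝ | ∃ Λ : Finset (Fin n), Λ.card = h ∧ s = ∑ i ∈ Λ, r i ^ 2}.Nonempty := by
    obtain ⟨Λ, -, hΛ⟩ := exists_subset_card_eq (s := (univ : Finset (Fin n))) (by simpa using hhn)
    exact ⟨_, Λ, hΛ, rfl⟩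
  have hfin : {s : ℝ | ∃ Λ : Finset (Fin n), Λ.card = h ∧ s = ∑ i ∈ Λ, r i ^ 2}.Finite :=
    (Set.finite_range fun Λ : Finset (Fin n) => ∑ i ∈ Λ, r i ^ 2).subset
      (by rintro _ ⟨Λ, -, rfl⟩; exact ⟨Λ, rfl⟩)
  exact hne.csInf_mem hfin

theorem quarter_mul_Th_le (hhn : h ≤ n) (r α : Fin n → ℝ) :
    1 / 4 * Th n h r ≤ 1 / 2 * ∑ i, (r i - α i) ^ 2 + 1 / 2 * Th n h α := by
  obtain ⟨Λ, hΛ, hα⟩ := exists_Th_eq_sum hhn α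
  calc 1 / 4 * Th n h r
      ≤ 1 / 4 * ∑ i ∈ Λ, r i ^ 2 := by gcongr; exact Th_le_sum r hΛ
    _ ≤ ∑ i ∈ Λ, (1 / 2 * (r i - α i) ^ 2 + 1 / 2 * α i ^ 2) := by
        rw [mul_sum]
        gcongr with i
        nlinarith [sq_nonneg (r i - 2 * α i)]
    _ = 1 / 2 * ∑ i ∈ Λ, (r i - α i) ^ 2 + 1 / 2 * Th n h α := by
        rw [sum_add_distrib, hα, mul_sum, mul_sum]
    _ ≤ 1 / 2 * ∑ i, (r i - α i) ^ 2 + 1 / 2 * Th n h α := by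
        gcongr
        exact subset_univ Λ

theorem exists_half_sum_add_half_mul_Th_le (hhn : h ≤ n) (r : Fin n → ℝ) :
    ∃ α : Fin n → ℝ, 1 / 2 * ∑ i, (r i - α i) ^ 2 + 1 / 2 * Th n h α ≤ 1 / 4 * Th n h r := by
  obtain ⟨Λ, hΛ, hr⟩ := exists_Th_eq_sum hhn r
  refine ⟨fun i => if i ∈ Λ then r i / 2 else r i, ?_⟩
  have hresidual : ∑ i, (r i - if i ∈ Λ then r i / 2 else r i) ^ 2 = ∑ i ∈ Λ, (r i / 2) ^ 2 :=
    calc ∑ i, (r i - if i ∈ Λ then r i / 2 else r i) ^ 2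
        = ∑ i, if i ∈ Λ then (r i / 2) ^ 2 else 0 := sum_congr rfl fun i _ => by split_ifs <;> ring
      _ = ∑ i ∈ Λ, (r i / 2) ^ 2 := by rw [sum_ite_mem, univ_inter]
  have hTh : Th n h (fun i => if i ∈ Λ then r i / 2 else r i) ≤ ∑ i ∈ Λ, (r i / 2) ^ 2 :=
    (Th_le_sum _ hΛ).trans_eq (sum_congr rfl fun i hi => by simp only [hi, if_true])
  have hquarter : ∑ i ∈ Λ, (r i / 2) ^ 2 = 1 / 4 * ∑ i ∈ Λ, r i ^ 2 := by
    rw [mul_sum]; exact sum_congr rfl fun i _ => by ring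
  rw [hresidual, hr]
  linarith

end TrimmedSquares

theorem stmt_6_general (n d h : ℕ) (hhn : h ≤ n)
    (y : Fin n → ℝ) (X : Matrix (Fin n) (Fin d) ℝ) (lam : ℝ) :
    sInf (Set.range fun p : ℝ × (Fin d → ℝ) =>
        (1 / 4) * Th n h (fun i => y i - p.1 - X.mulVec p.2 i) + lam * ∑ j, |p.2 j|) =
      sInf (Set.range fun q : ℝ × (Fin d → ℝ) × (Fin n → ℝ) =>
        (1 / 2) * ∑ i, (y i - q.1 - X.mulVec q.2.1 i - q.2.2 i) ^ 2
          + (1 / 2) * Th n h q.2.2 + lam * ∑ j, |q.2.1 j|) := by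
  refine Real.iInf_eq_iInf_of_forall_exists_le (fun ⟨β₀, β, α⟩ => ⟨(β₀, β), ?_⟩)
    (fun ⟨β₀, β⟩ => ?_)
  · exact add_le_add_left (quarter_mul_Th_le hhn (fun i => y i - β₀ - X.mulVec β i) α) _
  · obtain ⟨α, hα⟩ := exists_half_sum_add_half_mul_Th_le hhn (fun i => y i - β₀ - X.mulVec β i)
    exact ⟨(β₀, β, α), add_le_add_left hα _⟩

/-- the SLTS and STRLS problems have the same optimal value. -/
theorem stmt_6 (n d h : ℕ) (hh : 1 ≤ h) (hhn : h ≤ n)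
    (y : Fin n → ℝ) (X : Matrix (Fin n) (Fin d) ℝ) (lam : ℝ) (hlam : 0 < lam) :
    sInf (Set.range fun p : ℝ × (Fin d → ℝ) =>
        (1 / 4) * Th n h (fun i => y i - p.1 - X.mulVec p.2 i) + lam * ∑ j, |p.2 j|) =
      sInf (Set.range fun q : ℝ × (Fin d → ℝ) × (Fin n → ℝ) =>
        (1 / 2) * ∑ i, (y i - q.1 - X.mulVec q.2.1 i - q.2.2 i) ^ 2
          + (1 / 2) * Th n h q.2.2 + lam * ∑ j, |q.2.1 j|) :=
  stmt_6_general n d h hhn y X lam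
end

section
/- For any γ > 0, the map r ↦ (γ/(2γ+1))·T_h(r) (the Moreau envelope of γT_h) is the pointwise minimum of finitely many smooth quadratic functions, hence is locally Lipschitz continuous. -/
lemma locallyLipschitz_finset_inf' {α : Type*} [PseudoMetricSpace α] {ι : Type*}
    (s : Finset ι) (hs : s.Nonempty) (f : ι → α → ℝ) (hf : ∀ j, LocallyLipschitz (f j)) :
    LocallyLipschitz (fun x => s.inf' hs (fun j => f j x)) := by
  induction s using Finset.cons_induction with
  | empty => exact absurd hs (by simp)
  | cons j t hjt ih =>
      rcases t.eq_empty_or_nonempty with rfl | ht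
      · simpa using hf j
      · have h2 := (hf j).min (ih ht)
        have : (fun x => (Finset.cons j t hjt).inf' hs fun j => f j x)
            = fun x => min (f j x) (t.inf' ht fun j => f j x) := by
          funext x
          rw [Finset.inf'_cons (H := ht)]
        rw [this]
        exact h2

/-- the Moreau envelope r ↦ (γ/(2γ+1))·T_h(r) is a pointwise minimum of
finitely many smooth quadratic functions, and is locally Lipschitz. -/
theorem stmt_18 (n h : ℕ) (hh : 1 ≤ h) (hhn : h ≤ n) (γ : ℝ) (hγ : 0 < γ) :
    (∃ (k : ℕ) (qs : Fin k → (Fin n → ℝ) → ℝ), 0 < k ∧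
      (∀ j, ContDiff ℝ (⊤ : ℕ∞) (qs j)) ∧
      (∀ j, ∃ (Q : Matrix (Fin n) (Fin n) ℝ) (b : Fin n → ℝ) (c : ℝ),
        qs j = fun r => ∑ i, ∑ i', Q i i' * r i * r i' + ∑ i, b i * r i + c) ∧
      (∀ r : Fin n → ℝ,
        (γ / (2 * γ + 1)) * Th n h r = sInf (Set.range fun j => qs j r))) ∧
    LocallyLipschitz (fun r : Fin n → ℝ => (γ / (2 * γ + 1)) * Th n h r) := by
  set c₀ : ℝ := γ / (2 * γ + 1) with hc₀
  have hc₀pos : 0 < c₀ := by positivity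
  -- index type: subsets of card h
  set A : Type := {Λ : Finset (Fin n) // Λ.card = h} with hA
  haveI : Fintype A := by unfold A; infer_instance
  obtain ⟨Λ₀, -, hΛ₀⟩ := Finset.exists_subset_card_eq (s := (Finset.univ : Finset (Fin n)))
    (n := h) (by simpa using hhn)
  haveI : Nonempty A := ⟨⟨Λ₀, hΛ₀⟩⟩
  set k : ℕ := Fintype.card A with hk
  have hkpos : 0 < k := Fintype.card_pos
  set e : Fin k ≃ A := (Fintype.equivFin A).symm with he
  set qs : Fin k → (Fin n → ℝ) → ℝ := fun j r => c₀ * ∑ i ∈ (e j).1, r i ^ 2 with hqs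
  -- range identity
  have hrange : ∀ r : Fin n → ℝ, (Set.range fun j => qs j r)
      = (fun s => c₀ * s) ''
        {s : ℝ | ∃ Λ : Finset (Fin n), Λ.card = h ∧ s = ∑ i ∈ Λ, r i ^ 2} := by
    intro r
    ext x
    constructor
    · rintro ⟨j, rfl⟩
      exact ⟨∑ i ∈ (e j).1, r i ^ 2, ⟨(e j).1, (e j).2, rfl⟩, rfl⟩
    · rintro ⟨s, ⟨Λ, hΛ, rfl⟩, rfl⟩
      refine ⟨e.symm ⟨Λ, hΛ⟩, ?_⟩
      simp [hqs]
  -- Moreau envelope identity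
  have henv : ∀ r : Fin n → ℝ, c₀ * Th n h r = sInf (Set.range fun j => qs j r) := by
    intro r
    rw [hrange r, Th]
    have := Real.sInf_smul_of_nonneg hc₀pos.le
      {s : ℝ | ∃ Λ : Finset (Fin n), Λ.card = h ∧ s = ∑ i ∈ Λ, r i ^ 2}
    rw [smul_eq_mul] at this
    rw [← this]
    congr 1
  -- the min-as-finset-inf' identity
  have hmin : (fun r : Fin n → ℝ => c₀ * Th n h r)
      = fun r => (Finset.univ : Finset (Fin k)).inf'
          (Finset.univ_nonempty_iff.mpr ⟨⟨0, hkpos⟩⟩) (fun j => qs j r) := by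
    funext r
    rw [henv r, Finset.inf'_eq_csInf_image]
    congr 1
    rw [Finset.coe_univ, Set.image_univ]
  constructor
  · refine ⟨k, qs, hkpos, ?_, ?_, henv⟩
    · intro j
      exact contDiff_const.mul (ContDiff.sum fun i _ =>
        ((ContinuousLinearMap.proj i : (Fin n → ℝ) →L[ℝ] ℝ).contDiff).pow 2)
    · intro j
      refine ⟨fun i i' => if i = i' ∧ i ∈ (e j).1 then c₀ else 0, 0, 0, ?_⟩
      funext r
      simp only [hqs, Pi.zero_apply, zero_mul, Finset.sum_const_zero, add_zero]
      have inner : ∀ i, ∑ i', (if i = i' ∧ i ∈ (e j).1 then c₀ else 0) * r i * r i'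
          = if i ∈ (e j).1 then c₀ * r i ^ 2 else 0 := by
        intro i
        rw [Finset.sum_eq_single i]
        · by_cases hi : i ∈ (e j).1 <;> simp [hi] <;> ring
        · intro i' _ hne
          simp [Ne.symm hne]
        · intro hi
          exact absurd (Finset.mem_univ i) hi
      rw [show (∑ i, ∑ i', (if i = i' ∧ i ∈ (e j).1 then c₀ else 0) * r i * r i')
          = ∑ i, if i ∈ (e j).1 then c₀ * r i ^ 2 else 0 from
        Finset.sum_congr rfl fun i _ => inner i]
      rw [Finset.sum_ite_mem, Finset.univ_inter, Finset.mul_sum]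
  · rw [hmin]
    exact locallyLipschitz_finset_inf' _ _ _ fun j =>
      ((contDiff_const.mul (ContDiff.sum fun i _ =>
        ((ContinuousLinearMap.proj i : (Fin n → ℝ) →L[ℝ] ℝ).contDiff).pow 2)).of_le
          le_top).locallyLipschitz
end

section
/- Let φ : R^m → R be the pointwise minimum of finitely many convex functions φ_1, ..., φ_k, and let ξ* be a point such that every one-sided directional derivative of φ at ξ* is nonnegative (a d-stationary point). Then ξ* is a local minimizer of φ. -/
/-!
Near `ξ` the minimum is attained only by the active pieces (`φ_j ξ = φ ξ`), so along every ray
the right derivative of `φ` at `ξ` is the least right derivative of an active piece. Stationarity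
thus makes the directional derivatives of all active pieces nonnegative, and convexity gives
`φ_j ζ ≥ φ_j ξ + φ_j'(ξ; ζ - ξ) ≥ φ ξ` for active `j`, which bounds `φ` from below near `ξ`.
-/

open Filter Topology Set

lemma ConvexOn.comp_line {E : Type*} [AddCommGroup E] [Module ℝ E] {f : E → ℝ}
    (hf : ConvexOn ℝ univ f) (x d : E) : ConvexOn ℝ univ fun t : ℝ => f (x + t • d) :=
  (hf.translate_right x).comp_linearMap (LinearMap.toSpanSingleton ℝ E d)

lemma eventually_exists_active_iInf_eq {X ι : Type*} [TopologicalSpace X] [Finite ι] [Nonempty ι]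
    {f : ι → X → ℝ} {x₀ : X} (hf : ∀ i, ContinuousAt (f i) x₀) :
    ∀ᶠ x in 𝓝 x₀, ∃ i, f i x₀ = ⨅ j, f j x₀ ∧ f i x = ⨅ j, f j x := by
  obtain ⟨i₀, hi₀⟩ := exists_eq_ciInf_of_finite (f := fun i => f i x₀)
  have hinactive : ∀ᶠ x in 𝓝 x₀, ∀ i, f i x₀ ≠ ⨅ j, f j x₀ → f i₀ x < f i x := by
    refine eventually_all.2 fun i => ?_
    by_cases hi : f i x₀ = ⨅ j, f j x₀
    · exact .of_forall fun _ h => absurd hi h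
    · have hlt : f i₀ x₀ < f i x₀ :=
        hi₀ ▸ lt_of_le_of_ne (ciInf_le (finite_range _).bddBelow i) (Ne.symm hi)
      filter_upwards [(hf i₀).eventually_lt (hf i) hlt] with x hx _ using hx
  filter_upwards [hinactive] with x hx
  obtain ⟨i, hi⟩ := exists_eq_ciInf_of_finite (f := fun i => f i x)
  refine ⟨i, by_contra fun h => (hx i h).not_ge ?_, hi⟩
  exact hi ▸ ciInf_le (finite_range _).bddBelow i₀

section
variable {ι : Type*} [Finite ι] {g : ι → ℝ → ℝ}

lemma ConvexOn.hasDerivWithinAt_iInf_Ioi (hg : ∀ i, ConvexOn ℝ univ (g i)) {j : ι}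
    (hj : g j 0 = ⨅ i, g i 0)
    (hmin : ∀ i, g i 0 = ⨅ i, g i 0 → derivWithin (g j) (Ioi 0) 0 ≤ derivWithin (g i) (Ioi 0) 0) :
    HasDerivWithinAt (fun t => ⨅ i, g i t) (derivWithin (g j) (Ioi 0) 0) (Ioi 0) 0 := by
  have : Nonempty ι := ⟨j⟩
  have hbdd : ∀ t, BddBelow (range fun i => g i t) := fun t => (finite_range _).bddBelow
  have hderiv := (hg j).hasDerivWithinAt_rightDeriv_of_mem_interior (x := 0) (by simp)
  have hslope_ge : ∀ i t, 0 < t → derivWithin (g i) (Ioi 0) 0 ≤ slope (g i) 0 t := fun i t ht =>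
    (hg i).rightDeriv_le_slope_of_mem_interior (by simp) (mem_univ t) ht
  have hcont : ∀ i, ContinuousAt (g i) 0 := fun i =>
    ((hg i).continuousOn isOpen_univ).continuousAt univ_mem
  rw [hasDerivWithinAt_iff_tendsto_slope' self_notMem_Ioi] at hderiv ⊢
  refine tendsto_of_tendsto_of_tendsto_of_le_of_le' tendsto_const_nhds hderiv ?_ ?_
  · filter_upwards [nhdsWithin_le_nhds (eventually_exists_active_iInf_eq hcont),
      self_mem_nhdsWithin] with t ⟨i, hi, hit⟩ (ht : 0 < t)
    calc derivWithin (g j) (Ioi 0) 0 ≤ derivWithin (g i) (Ioi 0) 0 := hmin i hi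
      _ ≤ slope (g i) 0 t := hslope_ge i t ht
      _ = slope (fun t => ⨅ i, g i t) 0 t := by simp only [slope_def_field, hi, hit]
  · filter_upwards [self_mem_nhdsWithin] with t (ht : 0 < t)
    simp only [slope_def_field, sub_zero, ← hj]
    gcongr
    exact ciInf_le (hbdd t) j

lemma ConvexOn.rightDeriv_nonneg_of_active (hg : ∀ i, ConvexOn ℝ univ (g i))
    (hstat : ∀ c, HasDerivWithinAt (fun t => ⨅ i, g i t) c (Ioi 0) 0 → 0 ≤ c)
    {i : ι} (hi : g i 0 = ⨅ i, g i 0) : 0 ≤ derivWithin (g i) (Ioi 0) 0 := by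
  obtain ⟨j, hj, hmin⟩ := exists_min_image {i | g i 0 = ⨅ i, g i 0}
    (fun i => derivWithin (g i) (Ioi 0) 0) (toFinite _) ⟨i, hi⟩
  exact (hstat _ (ConvexOn.hasDerivWithinAt_iInf_Ioi hg hj hmin)).trans (hmin i hi)

end

theorem ConvexOn.isLocalMin_iInf {ι E : Type*} [Finite ι] [Nonempty ι] [NormedAddCommGroup E]
    [NormedSpace ℝ E] [FiniteDimensional ℝ E] {f : ι → E → ℝ} (hf : ∀ i, ConvexOn ℝ univ (f i))
    {ξ : E}
    (hstat : ∀ d c, HasDerivWithinAt (fun t : ℝ => ⨅ i, f i (ξ + t • d)) c (Ioi 0) 0 → 0 ≤ c) :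
    IsLocalMin (fun x => ⨅ i, f i x) ξ := by
  have hcont : ∀ i, ContinuousAt (f i) ξ := fun i =>
    ((hf i).continuousOn isOpen_univ).continuousAt univ_mem
  filter_upwards [eventually_exists_active_iInf_eq hcont] with x ⟨i, hi, hix⟩
  set g := fun i (t : ℝ) => f i (ξ + t • (x - ξ))
  have hg : ∀ i, ConvexOn ℝ univ (g i) := fun i => (hf i).comp_line ξ (x - ξ)
  have hgi : g i 0 = ⨅ i, g i 0 := by simpa [g] using hi
  have hslope : slope (g i) 0 1 = f i x - f i ξ := by simp [g, slope_def_field]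
  have hle := (hg i).rightDeriv_le_slope_of_mem_interior (x := 0) (by simp) (mem_univ 1) one_pos
  have hnonneg := (ConvexOn.rightDeriv_nonneg_of_active hg (hstat (x - ξ)) hgi).trans hle
  rw [← hix, ← hi]
  linarith

/-- a d-stationary point of a pointwise minimum of finitely many convex
functions is a local minimizer. -/
theorem stmt_19 (m k : ℕ) (hk : 0 < k)
    (φs : Fin k → EuclideanSpace ℝ (Fin m) → ℝ)
    (hconv : ∀ j, ConvexOn ℝ Set.univ (φs j))
    (φ : EuclideanSpace ℝ (Fin m) → ℝ)
    (hφ : φ = fun x => sInf (Set.range fun j => φs j x))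
    (ξ : EuclideanSpace ℝ (Fin m))
    (hstat : ∀ (dvec : EuclideanSpace ℝ (Fin m)) (c : ℝ),
      Filter.Tendsto (fun τ : ℝ => (φ (ξ + τ • dvec) - φ ξ) / τ)
        (nhdsWithin 0 (Set.Ioi 0)) (nhds c) → 0 ≤ c) :
    ∃ ε : ℝ, 0 < ε ∧ ∀ ζ : EuclideanSpace ℝ (Fin m), ‖ζ - ξ‖ < ε → φ ξ ≤ φ ζ := by
  have : Nonempty (Fin k) := ⟨⟨0, hk⟩⟩
  subst hφ
  have hmin : IsLocalMin (fun x => ⨅ j, φs j x) ξ := by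
    refine ConvexOn.isLocalMin_iInf hconv fun d c hc => hstat d c ?_
    rw [hasDerivWithinAt_iff_tendsto_slope' self_notMem_Ioi, slope_fun_def_field] at hc
    simp only [zero_smul, add_zero, sub_zero] at hc
    -- `⨅ j, φs j x` unfolds to `sInf (range fun j => φs j x)`
    exact hc
  obtain ⟨ε, hε, hball⟩ := Metric.eventually_nhds_iff.1 hmin
  exact ⟨ε, hε, fun ζ hζ => hball (by rwa [dist_eq_norm])⟩
end
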